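/- arXiv:2409.19977 — 5 statements merged into one kernel-verified Lean document; each statement's English description precedes it below -/
import Mathlib

section
/- Let g : ℝ → ℝ be a function satisfying Real.erf (g x) = x for all x ∈ (−1, 1) and g (Real.erf y) = y for all y ∈ ℝ (i.e., g is the inverse of the error function). Then for every μ ∈ ℝ and σ > 0, the pushforward of the uniform probability measure on the interval (0, 1) under the map z ↦ μ + √2 · σ · g (2z − 1) equals the Gaussian measure on ℝ with mean μ and variance σ². -/
open MeasureTheory ProbabilityTheory Set Real
open scoped ENNReal NNReal

lemma int_exp_sq : Integrable (fun s : ℝ => Real.exp (-s ^ 2)) := by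
  simpa [neg_mul, one_mul] using integrable_exp_neg_mul_sq (one_pos)

/-- The error function `erf x = (2/√π) ∫₀ˣ e^{-s²} ds`. -/
noncomputable def Real.erf (x : ℝ) : ℝ :=
  2 / Real.sqrt Real.pi * ∫ s in (0:ℝ)..x, Real.exp (-s ^ 2)

lemma erf_strictMono : StrictMono Real.erf := by
  intro x y hxy
  unfold Real.erf
  have h2 : (0:ℝ) < 2 / Real.sqrt Real.pi := by positivity
  apply mul_lt_mul_of_pos_left ?_ h2
  have hadd := intervalIntegral.integral_add_adjacent_intervals (a := 0) (b := x) (c := y)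
    int_exp_sq.intervalIntegrable int_exp_sq.intervalIntegrable
  have hpos : 0 < ∫ s in x..y, Real.exp (-s ^ 2) :=
    intervalIntegral.intervalIntegral_pos_of_pos int_exp_sq.intervalIntegrable
      (fun s => Real.exp_pos _) hxy
  linarith

lemma erf_lt_one (y : ℝ) : Real.erf y < 1 := by
  have hπ : (0:ℝ) < Real.sqrt Real.pi := Real.sqrt_pos.mpr Real.pi_pos
  have key : ∫ s in (0:ℝ)..y, Real.exp (-s ^ 2) < Real.sqrt Real.pi / 2 := by
    rcases le_or_gt y 0 with hy | hy
    · have : ∫ s in (0:ℝ)..y, Real.exp (-s ^ 2) ≤ 0 := by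
        rw [← neg_nonneg, ← intervalIntegral.integral_symm]
        exact intervalIntegral.integral_nonneg hy (fun s _ => (Real.exp_pos _).le)
      linarith
    · have hIoi : ∫ s in Ioi (0:ℝ), Real.exp (-s ^ 2) = Real.sqrt Real.pi / 2 := by
        simpa [neg_mul, one_mul] using integral_gaussian_Ioi 1
      have hsplit : (∫ s in (0:ℝ)..y, Real.exp (-s ^ 2)) + ∫ s in Ioi y, Real.exp (-s ^ 2)
          = ∫ s in Ioi (0:ℝ), Real.exp (-s ^ 2) := by
        rw [intervalIntegral.integral_of_le hy.le,
          ← setIntegral_union Ioc_disjoint_Ioi_same measurableSet_Ioi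
            int_exp_sq.integrableOn int_exp_sq.integrableOn,
          Ioc_union_Ioi_eq_Ioi hy.le]
      have htail : 0 < ∫ s in Ioi y, Real.exp (-s ^ 2) := by
        have h1 : (∫ s in Ioc y (y + 1), Real.exp (-s ^ 2))
            ≤ ∫ s in Ioi y, Real.exp (-s ^ 2) :=
          setIntegral_mono_set int_exp_sq.integrableOn
            (ae_of_all _ fun s => (Real.exp_pos _).le)
            (HasSubset.Subset.eventuallyLE Ioc_subset_Ioi_self)
        have h2 : 0 < ∫ s in Ioc y (y + 1), Real.exp (-s ^ 2) := by
          rw [← intervalIntegral.integral_of_le (by linarith)]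
          exact intervalIntegral.intervalIntegral_pos_of_pos
            int_exp_sq.intervalIntegrable (fun s => Real.exp_pos _) (by linarith)
        linarith
      linarith
  unfold Real.erf
  calc 2 / Real.sqrt Real.pi * ∫ s in (0:ℝ)..y, Real.exp (-s ^ 2)
      < 2 / Real.sqrt Real.pi * (Real.sqrt Real.pi / 2) := by
        apply mul_lt_mul_of_pos_left key (by positivity)
    _ = 1 := by field_simp

lemma erf_neg (y : ℝ) : Real.erf (-y) = -Real.erf y := by
  unfold Real.erf
  rw [← mul_neg]
  congr 1
  calc ∫ s in (0:ℝ)..(-y), Real.exp (-s ^ 2)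
      = ∫ s in (0:ℝ)..(-y), Real.exp (-(-s) ^ 2) := by simp [neg_sq]
    _ = ∫ s in y..(0:ℝ), Real.exp (-s ^ 2) := by
        rw [intervalIntegral.integral_comp_neg (fun s => Real.exp (-s ^ 2))]; norm_num
    _ = - ∫ s in (0:ℝ)..y, Real.exp (-s ^ 2) := intervalIntegral.integral_symm _ _

lemma neg_one_lt_erf (y : ℝ) : -1 < Real.erf y := by
  have := erf_lt_one (-y)
  rw [erf_neg] at this
  linarith

lemma gaussian_cdf (μ σ a : ℝ) (hσ : 0 < σ) :
    ∫ x in Set.Iic a, gaussianPDFReal μ (σ ^ 2).toNNReal x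
      = (1 + Real.erf ((a - μ) / (Real.sqrt 2 * σ))) / 2 := by
  set v : ℝ≥0 := (σ ^ 2).toNNReal with hv
  have hvr : (v : ℝ) = σ ^ 2 := Real.coe_toNNReal _ (sq_nonneg σ)
  have hv0 : v ≠ 0 := by
    simp only [hv, ne_eq, Real.toNNReal_eq_zero, not_le]
    positivity
  have hint : Integrable (gaussianPDFReal μ v) := integrable_gaussianPDFReal μ v
  -- symmetry of the pdf about μ
  have hsymm : ∀ x, gaussianPDFReal μ v (2 * μ - x) = gaussianPDFReal μ v x := by
    intro x
    unfold gaussianPDFReal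
    congr 2
    ring
  have hhalf : ∫ x in Set.Iic μ, gaussianPDFReal μ v x = 1 / 2 := by
    have mp : MeasurePreserving (fun x : ℝ => 2 * μ - x) volume volume :=
      MeasureTheory.Measure.measurePreserving_sub_left volume (2 * μ)
    have emb : MeasurableEmbedding (fun x : ℝ => 2 * μ - x) :=
      (Homeomorph.subLeft (2 * μ)).isClosedEmbedding.measurableEmbedding
    have hpre : (fun x : ℝ => 2 * μ - x) ⁻¹' Set.Iic μ = Set.Ici μ := by
      ext x
      simp only [Set.mem_preimage, Set.mem_Iic, Set.mem_Ici]
      constructor <;> intro h <;> linarith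
    have hrefl : ∫ x in Set.Ici μ, gaussianPDFReal μ v x
        = ∫ x in Set.Iic μ, gaussianPDFReal μ v x := by
      have := mp.setIntegral_preimage_emb emb (gaussianPDFReal μ v) (Set.Iic μ)
      rw [hpre] at this
      rw [← this]
      exact setIntegral_congr_fun measurableSet_Ici fun x _ => (hsymm x).symm
    have hsum : (∫ x in Set.Iic μ, gaussianPDFReal μ v x)
        + ∫ x in Set.Ioi μ, gaussianPDFReal μ v x = 1 := by
      rw [intervalIntegral.integral_Iic_add_Ioi hint.integrableOn hint.integrableOn]
      exact integral_gaussianPDFReal_eq_one μ hv0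
    rw [← integral_Ici_eq_integral_Ioi, hrefl] at hsum
    linarith
  -- the interval part by substitution
  have hc : Real.sqrt 2 * σ ≠ 0 := by positivity
  have hpdf : ∀ x, gaussianPDFReal μ v x
      = (Real.sqrt (2 * Real.pi) * σ)⁻¹
        * Real.exp (-(x / (Real.sqrt 2 * σ) - μ / (Real.sqrt 2 * σ)) ^ 2) := by
    intro x
    unfold gaussianPDFReal
    rw [hvr]
    congr 1
    · congr 1
      rw [show 2 * Real.pi * σ ^ 2 = (2 * Real.pi) * σ ^ 2 by ring,
        Real.sqrt_mul (by positivity), Real.sqrt_sq hσ.le]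
    · rw [div_sub_div_same, div_pow, neg_div, mul_pow,
        Real.sq_sqrt (by norm_num : (0:ℝ) ≤ 2)]
  have hIoc : ∫ x in μ..a, gaussianPDFReal μ v x
      = Real.erf ((a - μ) / (Real.sqrt 2 * σ)) / 2 := by
    simp_rw [hpdf]
    rw [intervalIntegral.integral_const_mul,
      intervalIntegral.integral_comp_div_sub (fun s => Real.exp (-s ^ 2)) hc
        (μ / (Real.sqrt 2 * σ)),
      sub_self, div_sub_div_same, smul_eq_mul, ← mul_assoc]
    unfold Real.erf
    have hcoef : (Real.sqrt (2 * Real.pi) * σ)⁻¹ * (Real.sqrt 2 * σ)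
        = (Real.sqrt Real.pi)⁻¹ := by
      rw [Real.sqrt_mul (by norm_num : (0:ℝ) ≤ 2)]
      have h1 : Real.sqrt Real.pi ≠ 0 := by positivity
      have h2 : Real.sqrt 2 ≠ 0 := by positivity
      field_simp
    rw [hcoef]
    have h1 : Real.sqrt Real.pi ≠ 0 := by positivity
    field_simp
  have hkey := intervalIntegral.integral_Iic_sub_Iic (μ := (volume : Measure ℝ)) (a := μ) (b := a)
    hint.integrableOn hint.integrableOn
  rw [hhalf, hIoc] at hkey
  linarith

/-- Pushing the uniform distribution on (0,1) forward under the map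
z ↦ μ + √2·σ·erfinv(2z - 1) gives the Gaussian measure with mean μ and variance σ². -/
theorem pushforward_unif_erfInv_eq_gaussian (g : ℝ → ℝ)
    (hg₁ : ∀ x ∈ Set.Ioo (-1 : ℝ) 1, Real.erf (g x) = x)
    (hg₂ : ∀ y : ℝ, g (Real.erf y) = y)
    (μ σ : ℝ) (hσ : 0 < σ) :
    ((volume (Set.Ioo (0:ℝ) 1))⁻¹ • volume.restrict (Set.Ioo (0:ℝ) 1)).map
        (fun z => μ + Real.sqrt 2 * σ * g (2 * z - 1)) =
      gaussianReal μ (Real.toNNReal (σ ^ 2)) := by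
  have hsqσ : (0:ℝ) < Real.sqrt 2 * σ := by positivity
  have hv0 : (σ ^ 2).toNNReal ≠ 0 := by
    simp only [ne_eq, Real.toNNReal_eq_zero, not_le]; positivity
  have huni : (volume (Set.Ioo (0:ℝ) 1))⁻¹ • volume.restrict (Set.Ioo (0:ℝ) 1)
      = volume.restrict (Set.Ioo (0:ℝ) 1) := by
    rw [Real.volume_Ioo]
    norm_num
  rw [huni]
  have hmono : MonotoneOn (fun z : ℝ => μ + Real.sqrt 2 * σ * g (2 * z - 1))
      (Set.Ioo (0:ℝ) 1) := by
    intro z₁ hz₁ z₂ hz₂ hz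
    have h₁ : (2 * z₁ - 1) ∈ Set.Ioo (-1:ℝ) 1 := ⟨by linarith [hz₁.1], by linarith [hz₁.2]⟩
    have h₂ : (2 * z₂ - 1) ∈ Set.Ioo (-1:ℝ) 1 := ⟨by linarith [hz₂.1], by linarith [hz₂.2]⟩
    have hgle : g (2 * z₁ - 1) ≤ g (2 * z₂ - 1) := by
      rw [← erf_strictMono.le_iff_le, hg₁ _ h₁, hg₁ _ h₂]
      linarith
    have := mul_le_mul_of_nonneg_left hgle hsqσ.le
    show μ + Real.sqrt 2 * σ * g (2 * z₁ - 1) ≤ μ + Real.sqrt 2 * σ * g (2 * z₂ - 1)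
    linarith
  have haem : AEMeasurable (fun z : ℝ => μ + Real.sqrt 2 * σ * g (2 * z - 1))
      (volume.restrict (Set.Ioo (0:ℝ) 1)) :=
    aemeasurable_restrict_of_monotoneOn measurableSet_Ioo hmono
  haveI : IsFiniteMeasure ((volume.restrict (Set.Ioo (0:ℝ) 1)).map
      (fun z : ℝ => μ + Real.sqrt 2 * σ * g (2 * z - 1))) := by
    constructor
    rw [Measure.map_apply_of_aemeasurable haem MeasurableSet.univ, Set.preimage_univ,
      Measure.restrict_apply_univ, Real.volume_Ioo]
    norm_num
  refine MeasureTheory.Measure.ext_of_Iic _ _ (fun a => ?_)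
  set c' : ℝ := (a - μ) / (Real.sqrt 2 * σ) with hc'
  have herf1 : Real.erf c' < 1 := erf_lt_one _
  have herf2 : -1 < Real.erf c' := neg_one_lt_erf _
  set t : ℝ := (1 + Real.erf c') / 2 with ht
  have htpos : 0 < t := by rw [ht]; linarith
  have htlt : t < 1 := by rw [ht]; linarith
  rw [Measure.map_apply_of_aemeasurable haem measurableSet_Iic,
    Measure.restrict_apply' measurableSet_Ioo]
  have hset : (fun z : ℝ => μ + Real.sqrt 2 * σ * g (2 * z - 1)) ⁻¹' (Set.Iic a)
      ∩ Set.Ioo 0 1 = Set.Ioc 0 t := by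
    ext z
    simp only [Set.mem_inter_iff, Set.mem_preimage, Set.mem_Iic, Set.mem_Ioo, Set.mem_Ioc]
    constructor
    · rintro ⟨hza, hz0, hz1⟩
      refine ⟨hz0, ?_⟩
      have hmem : (2 * z - 1) ∈ Set.Ioo (-1:ℝ) 1 := ⟨by linarith, by linarith⟩
      have h1 : g (2 * z - 1) ≤ c' := by
        rw [hc', le_div_iff₀ hsqσ]
        nlinarith
      have h2 : (2 : ℝ) * z - 1 ≤ Real.erf c' := by
        rw [← hg₁ _ hmem]
        exact erf_strictMono.le_iff_le.mpr h1
      rw [ht]; linarith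
    · rintro ⟨hz0, hzt⟩
      have hz1 : z < 1 := lt_of_le_of_lt hzt htlt
      refine ⟨?_, hz0, hz1⟩
      have hmem : (2 * z - 1) ∈ Set.Ioo (-1:ℝ) 1 := ⟨by linarith, by linarith⟩
      have h2 : (2 : ℝ) * z - 1 ≤ Real.erf c' := by rw [ht] at hzt; linarith
      have h1 : g (2 * z - 1) ≤ c' := by
        rw [← erf_strictMono.le_iff_le, hg₁ _ hmem]
        exact h2
      have : Real.sqrt 2 * σ * g (2 * z - 1) ≤ Real.sqrt 2 * σ * c' :=
        mul_le_mul_of_nonneg_left h1 hsqσ.le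
      rw [hc', mul_div_cancel₀ _ hsqσ.ne'] at this
      linarith
  rw [hset, Real.volume_Ioc,
    gaussianReal_apply_eq_integral μ hv0 (Set.Iic a),
    gaussian_cdf μ σ a hσ]
  norm_num
  rfl
end

section
/- Let n ∈ ℕ and for each i let pᵢ and qᵢ be probability measures on ℝ with finite second moments (∫ x² dpᵢ < ∞ and ∫ x² dqᵢ < ∞). Let p = ⨂ᵢ pᵢ and q = ⨂ᵢ qᵢ be the corresponding product probability measures on ℝⁿ equipped with the Euclidean norm. Then W₂²(p, q) = Σᵢ W₂²(pᵢ, qᵢ). -/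
open MeasureTheory ProbabilityTheory Function
open scoped ENNReal NNReal

/-- Squared 2-Wasserstein distance between two measures on a normed space `E`:
the infimum over all couplings `γ` of `p` and `q` of `∫ ‖x - y‖² dγ(x, y)`. -/
noncomputable def W2sq {E : Type*} [NormedAddCommGroup E] [MeasurableSpace E]
    (p q : Measure E) : ℝ :=
  sInf { c | ∃ γ : Measure (E × E), IsProbabilityMeasure γ ∧
    γ.map Prod.fst = p ∧ γ.map Prod.snd = q ∧ c = ∫ z, ‖z.1 - z.2‖ ^ 2 ∂γ }

/-- Squared 2-Wasserstein distance between two measures on `ℝⁿ = (Fin n → ℝ)` with the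
Euclidean norm `‖x - y‖² = ∑ i, (x i - y i)²`: the infimum over all couplings `γ` of `p` and
`q` of `∫ ‖x - y‖² dγ(x, y)`. -/
noncomputable def W2sqPi {n : ℕ} (p q : Measure (Fin n → ℝ)) : ℝ :=
  sInf { c | ∃ γ : Measure ((Fin n → ℝ) × (Fin n → ℝ)), IsProbabilityMeasure γ ∧
    γ.map Prod.fst = p ∧ γ.map Prod.snd = q ∧ c = ∫ z, ∑ i, (z.1 i - z.2 i) ^ 2 ∂γ }

namespace W2aux

lemma pi_map_eval {n : ℕ} {α : Fin n → Type*} [∀ i, MeasurableSpace (α i)]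
    (μ : ∀ i, Measure (α i)) [∀ i, IsProbabilityMeasure (μ i)]
    (i : Fin n) : (Measure.pi μ).map (Function.eval i) = μ i := by
  ext s hs
  rw [Measure.map_apply (measurable_pi_apply i) hs, Set.eval_preimage, Measure.pi_pi]
  rw [Finset.prod_eq_single i]
  · simp
  · intro j _ hj; simp [Function.update_of_ne hj]
  · simp

lemma pi_map_piMap {n : ℕ} (γ : Fin n → Measure (ℝ × ℝ))
    [∀ i, IsProbabilityMeasure (γ i)] {g : ℝ × ℝ → ℝ} (hg : Measurable g) :
    (Measure.pi γ).map (fun f i => g (f i)) = Measure.pi (fun i => (γ i).map g) := by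
  have hmeas : Measurable (fun (f : Fin n → ℝ × ℝ) i => g (f i)) :=
    measurable_pi_lambda _ fun i => hg.comp (measurable_pi_apply i)
  refine (Measure.pi_eq fun s hs => ?_).symm
  rw [Measure.map_apply hmeas (MeasurableSet.univ_pi hs)]
  have : (fun (f : Fin n → ℝ × ℝ) i => g (f i)) ⁻¹' Set.pi Set.univ s
      = Set.pi Set.univ (fun i => g ⁻¹' s i) := by
    ext f; simp [Set.mem_pi]
  rw [this, Measure.pi_pi]
  exact Finset.prod_congr rfl fun i _ => (Measure.map_apply hg (hs i)).symm

lemma integrable_sq_of_lintegral {μ : Measure ℝ}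
    (h : ∫⁻ x, ENNReal.ofReal (x ^ 2) ∂μ < ⊤) : Integrable (fun x : ℝ => x ^ 2) μ := by
  refine ⟨(continuous_pow 2).aestronglyMeasurable, ?_⟩
  rw [hasFiniteIntegral_iff_ofReal (Filter.Eventually.of_forall fun x => sq_nonneg x)]
  exact h

/-- elements of the 1-d Wasserstein set are nonneg -/
lemma T_nonneg {p q : Measure ℝ} {c : ℝ}
    (hc : c ∈ { c | ∃ γ : Measure (ℝ × ℝ), IsProbabilityMeasure γ ∧
      γ.map Prod.fst = p ∧ γ.map Prod.snd = q ∧ c = ∫ z, ‖z.1 - z.2‖ ^ 2 ∂γ }) : 0 ≤ c := by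
  obtain ⟨γ, _, _, _, rfl⟩ := hc
  exact integral_nonneg fun z => by positivity

lemma T_nonempty (p q : Measure ℝ) [IsProbabilityMeasure p] [IsProbabilityMeasure q] :
    Set.Nonempty { c | ∃ γ : Measure (ℝ × ℝ), IsProbabilityMeasure γ ∧
      γ.map Prod.fst = p ∧ γ.map Prod.snd = q ∧ c = ∫ z, ‖z.1 - z.2‖ ^ 2 ∂γ } :=
  ⟨_, p.prod q, inferInstance, by simp [Measure.map_fst_prod],
    by simp [Measure.map_snd_prod], rfl⟩

end W2aux

open W2aux in
/-- For product probability measures on ℝⁿ (Euclidean norm) whose factors have finite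
second moments, the squared 2-Wasserstein distance decomposes as the sum of the
coordinatewise squared 2-Wasserstein distances. -/
theorem W2sq_pi_eq_sum_W2sq (n : ℕ) (p q : Fin n → Measure ℝ)
    (hp : ∀ i, IsProbabilityMeasure (p i)) (hq : ∀ i, IsProbabilityMeasure (q i))
    (hp2 : ∀ i, (∫⁻ x, ENNReal.ofReal (x ^ 2) ∂(p i)) < ⊤)
    (hq2 : ∀ i, (∫⁻ x, ENNReal.ofReal (x ^ 2) ∂(q i)) < ⊤) :
    W2sqPi (Measure.pi p) (Measure.pi q) = ∑ i, W2sq (p i) (q i) := by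
  haveI := hp; haveI := hq
  set T : Fin n → Set ℝ := fun i =>
    { c | ∃ γ : Measure (ℝ × ℝ), IsProbabilityMeasure γ ∧
      γ.map Prod.fst = p i ∧ γ.map Prod.snd = q i ∧ c = ∫ z, ‖z.1 - z.2‖ ^ 2 ∂γ } with hT
  set S : Set ℝ :=
    { c | ∃ γ : Measure ((Fin n → ℝ) × (Fin n → ℝ)), IsProbabilityMeasure γ ∧
      γ.map Prod.fst = Measure.pi p ∧ γ.map Prod.snd = Measure.pi q ∧
      c = ∫ z, ∑ i, (z.1 i - z.2 i) ^ 2 ∂γ } with hS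
  have hTbdd : ∀ i, BddBelow (T i) := fun i => ⟨0, fun c hc => T_nonneg hc⟩
  have hTne : ∀ i, (T i).Nonempty := fun i => T_nonempty (p i) (q i)
  have hSne : S.Nonempty := by
    refine ⟨_, (Measure.pi p).prod (Measure.pi q), inferInstance, ?_, ?_, rfl⟩ <;>
      simp [Measure.map_fst_prod, Measure.map_snd_prod]
  have hnormsq : ∀ x : ℝ, ‖x‖ ^ 2 = x ^ 2 := fun x => by
    rw [Real.norm_eq_abs, sq_abs]
  have key : W2sqPi (Measure.pi p) (Measure.pi q) = sInf S := rfl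
  have keyT : ∀ i, W2sq (p i) (q i) = sInf (T i) := fun i => rfl
  rw [key]; simp_rw [keyT]
  apply le_antisymm
  · -- sInf S ≤ ∑ sInf (T i)
    refine le_of_forall_pos_le_add fun ε hε => ?_
    have hε' : (0:ℝ) < ε / (n + 1) := by positivity
    have hchoice : ∀ i, ∃ c ∈ T i, c < sInf (T i) + ε / (n + 1) := fun i =>
      Real.lt_sInf_add_pos (hTne i) hε'
    choose c hcT hclt using hchoice
    choose γ hγprob hγfst hγsnd hγc using hcT
    haveI := hγprob
    -- build product coupling
    set Φ : (Fin n → ℝ × ℝ) → (Fin n → ℝ) × (Fin n → ℝ) :=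
      fun f => (fun i => (f i).1, fun i => (f i).2) with hΦ
    have hΦmeas : Measurable Φ := by
      refine Measurable.prod ?_ ?_
      · exact measurable_pi_lambda _ fun i => measurable_fst.comp (measurable_pi_apply i)
      · exact measurable_pi_lambda _ fun i => measurable_snd.comp (measurable_pi_apply i)
    haveI : IsProbabilityMeasure ((Measure.pi γ).map Φ) :=
      Measure.isProbabilityMeasure_map hΦmeas.aemeasurable
    have hfst : ((Measure.pi γ).map Φ).map Prod.fst = Measure.pi p := by
      rw [Measure.map_map measurable_fst hΦmeas,
        show (Prod.fst ∘ Φ) = fun f i => Prod.fst (f i) from rfl,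
        pi_map_piMap γ measurable_fst]
      exact congrArg Measure.pi (funext hγfst)
    have hsnd : ((Measure.pi γ).map Φ).map Prod.snd = Measure.pi q := by
      rw [Measure.map_map measurable_snd hΦmeas,
        show (Prod.snd ∘ Φ) = fun f i => Prod.snd (f i) from rfl,
        pi_map_piMap γ measurable_snd]
      exact congrArg Measure.pi (funext hγsnd)
    have hmem : (∫ z, ∑ i, (z.1 i - z.2 i) ^ 2 ∂((Measure.pi γ).map Φ)) ∈ S :=
      ⟨(Measure.pi γ).map Φ, inferInstance, hfst, hsnd, rfl⟩
    have hSbdd : BddBelow S := by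
      refine ⟨0, ?_⟩
      rintro d ⟨γ', _, _, _, rfl⟩
      exact integral_nonneg fun z => Finset.sum_nonneg fun i _ => sq_nonneg _
    have hrw : (∫ z, ∑ i, (z.1 i - z.2 i) ^ 2 ∂((Measure.pi γ).map Φ))
        = ∫ f, ∑ i, ((f i).1 - (f i).2) ^ 2 ∂(Measure.pi γ) := by
      rw [integral_map hΦmeas.aemeasurable (Continuous.aestronglyMeasurable (by fun_prop))]
    have hterm : ∀ i, (∫ f, ((f i).1 - (f i).2) ^ 2 ∂(Measure.pi γ)) = c i := by
      intro i
      rw [hγc i, ← pi_map_eval γ i,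
        integral_map (measurable_pi_apply i).aemeasurable
          (Continuous.aestronglyMeasurable (by fun_prop))]
      simp_rw [hnormsq]
    have hcnonneg : ∀ i, 0 ≤ c i := fun i =>
      (hγc i) ▸ integral_nonneg fun z => by positivity
    have hcost : (∫ f, ∑ i, ((f i).1 - (f i).2) ^ 2 ∂(Measure.pi γ)) ≤ ∑ i, c i := by
      by_cases hI : Integrable
          (fun f : Fin n → ℝ × ℝ => ∑ i, ((f i).1 - (f i).2) ^ 2) (Measure.pi γ)
      · have htermint : ∀ i : Fin n, Integrable
            (fun f : Fin n → ℝ × ℝ => ((f i).1 - (f i).2) ^ 2) (Measure.pi γ) := by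
          intro i
          refine Integrable.mono' hI (Continuous.aestronglyMeasurable (by fun_prop)) ?_
          refine Filter.Eventually.of_forall fun f => ?_
          rw [Real.norm_eq_abs, abs_of_nonneg (sq_nonneg _)]
          exact Finset.single_le_sum (f := fun j => ((f j).1 - (f j).2) ^ 2)
            (fun j _ => sq_nonneg _) (Finset.mem_univ i)
        rw [integral_finset_sum _ fun i _ => htermint i]
        exact le_of_eq (Finset.sum_congr rfl fun i _ => hterm i)
      · rw [integral_undef hI]
        exact Finset.sum_nonneg fun i _ => hcnonneg i
    have hfin : (∑ i, c i : ℝ) ≤ ∑ i, sInf (T i) + ε := by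
      calc (∑ i, c i : ℝ) ≤ ∑ i, (sInf (T i) + ε / (n + 1)) :=
            Finset.sum_le_sum fun i _ => (hclt i).le
        _ = ∑ i, sInf (T i) + n * (ε / (n + 1)) := by
            rw [Finset.sum_add_distrib, Finset.sum_const, Finset.card_univ,
              Fintype.card_fin, nsmul_eq_mul]
        _ ≤ ∑ i, sInf (T i) + ε := by
            have h1 : (n : ℝ) * (ε / (n + 1)) ≤ ε := by
              rw [mul_div_assoc', div_le_iff₀ (by positivity)]
              nlinarith
            linarith
    calc sInf S ≤ _ := csInf_le hSbdd hmem
      _ = _ := hrw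
      _ ≤ ∑ i, c i := hcost
      _ ≤ _ := hfin
  · -- ∑ sInf (T i) ≤ sInf S
    refine le_csInf hSne ?_
    rintro c ⟨γ, hγprob, hγfst, hγsnd, rfl⟩
    haveI := hγprob
    -- coordinate couplings
    set π : Fin n → ((Fin n → ℝ) × (Fin n → ℝ)) → ℝ × ℝ :=
      fun i z => (z.1 i, z.2 i) with hπ
    have hπmeas : ∀ i, Measurable (π i) := fun i =>
      ((measurable_pi_apply i).comp measurable_fst).prod
        ((measurable_pi_apply i).comp measurable_snd)
    have hmargfst : ∀ i, (γ.map (π i)).map Prod.fst = p i := by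
      intro i
      rw [Measure.map_map measurable_fst (hπmeas i)]
      have : (Prod.fst ∘ π i) = (Function.eval i) ∘ (Prod.fst :
          ((Fin n → ℝ) × (Fin n → ℝ)) → (Fin n → ℝ)) := rfl
      rw [this, ← Measure.map_map (measurable_pi_apply i) measurable_fst, hγfst,
        pi_map_eval p i]
    have hmargsnd : ∀ i, (γ.map (π i)).map Prod.snd = q i := by
      intro i
      rw [Measure.map_map measurable_snd (hπmeas i)]
      have : (Prod.snd ∘ π i) = (Function.eval i) ∘ (Prod.snd :
          ((Fin n → ℝ) × (Fin n → ℝ)) → (Fin n → ℝ)) := rfl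
      rw [this, ← Measure.map_map (measurable_pi_apply i) measurable_snd, hγsnd,
        pi_map_eval q i]
    -- integrability of each coordinate cost
    have hint1 : ∀ i, Integrable (fun z : (Fin n → ℝ) × (Fin n → ℝ) => (z.1 i) ^ 2) γ := by
      intro i
      have hmap : γ.map (fun z : (Fin n → ℝ) × (Fin n → ℝ) => z.1 i) = p i := by
        rw [show (fun z : (Fin n → ℝ) × (Fin n → ℝ) => z.1 i)
            = (Function.eval i) ∘ Prod.fst from rfl,
          ← Measure.map_map (measurable_pi_apply i) measurable_fst, hγfst, pi_map_eval p i]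
      have := integrable_sq_of_lintegral (hp2 i)
      rw [← hmap] at this
      exact (integrable_map_measure (continuous_pow 2).aestronglyMeasurable
        ((measurable_pi_apply i).comp measurable_fst).aemeasurable).mp this
    have hint2 : ∀ i, Integrable (fun z : (Fin n → ℝ) × (Fin n → ℝ) => (z.2 i) ^ 2) γ := by
      intro i
      have hmap : γ.map (fun z : (Fin n → ℝ) × (Fin n → ℝ) => z.2 i) = q i := by
        rw [show (fun z : (Fin n → ℝ) × (Fin n → ℝ) => z.2 i)
            = (Function.eval i) ∘ Prod.snd from rfl,
          ← Measure.map_map (measurable_pi_apply i) measurable_snd, hγsnd, pi_map_eval q i]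
      have := integrable_sq_of_lintegral (hq2 i)
      rw [← hmap] at this
      exact (integrable_map_measure (continuous_pow 2).aestronglyMeasurable
        ((measurable_pi_apply i).comp measurable_snd).aemeasurable).mp this
    have hint : ∀ i, Integrable
        (fun z : (Fin n → ℝ) × (Fin n → ℝ) => (z.1 i - z.2 i) ^ 2) γ := by
      intro i
      refine Integrable.mono' (((hint1 i).const_mul 2).add ((hint2 i).const_mul 2)) ?_ ?_
      · exact (Continuous.aestronglyMeasurable (by fun_prop))
      · refine Filter.Eventually.of_forall fun z => ?_
        simp only [Pi.add_apply]
        rw [Real.norm_eq_abs, abs_of_nonneg (sq_nonneg _)]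
        nlinarith [sq_nonneg (z.1 i + z.2 i)]
    rw [integral_finset_sum _ fun i _ => hint i]
    refine Finset.sum_le_sum fun i _ => ?_
    have hci : (∫ z, (z.1 i - z.2 i) ^ 2 ∂γ) ∈ T i := by
      refine ⟨γ.map (π i), Measure.isProbabilityMeasure_map (hπmeas i).aemeasurable,
        hmargfst i, hmargsnd i, ?_⟩
      rw [integral_map (hπmeas i).aemeasurable (Continuous.aestronglyMeasurable (by fun_prop))]
      simp_rw [hnormsq]
      rfl
    exact csInf_le (hTbdd i) hci
end

section
/- Let μ₁, μ₂ ∈ ℝ and σ₁, σ₂ > 0. Let p be the uniform probability measure on [μ₁ − √3·σ₁, μ₁ + √3·σ₁] and q the uniform probability measure on [μ₂ − √3·σ₂, μ₂ + √3·σ₂]. Then W₂²(p, q) = (μ₁ − μ₂)² + (σ₁ − σ₂)². -/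
open MeasureTheory ProbabilityTheory
open scoped ENNReal NNReal

/-- The uniform probability measure on `[a, b]`: `(b - a)⁻¹ • (volume.restrict (Set.Icc a b))`. -/
noncomputable def unif (a b : ℝ) : Measure ℝ :=
  (ENNReal.ofReal (b - a))⁻¹ • volume.restrict (Set.Icc a b)

lemma unif_prob {a b : ℝ} (h : a < b) : IsProbabilityMeasure (unif a b) := by
  constructor
  rw [unif, Measure.smul_apply, Measure.restrict_apply MeasurableSet.univ, Set.univ_inter,
    Real.volume_Icc, smul_eq_mul, ENNReal.inv_mul_cancel]
  · simp only [ne_eq, ENNReal.ofReal_eq_zero, not_le]; linarith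
  · exact ENNReal.ofReal_ne_top

lemma unif_compl {a b : ℝ} (h : a < b) : unif a b (Set.Icc a b)ᶜ = 0 := by
  rw [unif, Measure.smul_apply, Measure.restrict_apply (measurableSet_Icc.compl)]
  simp

lemma integrable_unif {a b : ℝ} {f : ℝ → ℝ} (h : a < b) (hf : Continuous f) :
    Integrable f (unif a b) := by
  rw [unif]
  refine Integrable.smul_measure ?_ (ENNReal.inv_ne_top.2 ?_)
  · exact (hf.integrableOn_Icc (μ := volume))
  · simp only [ne_eq, ENNReal.ofReal_eq_zero, not_le]; linarith

lemma integral_unif {a b : ℝ} (h : a < b) (f : ℝ → ℝ) :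
    ∫ x, f x ∂(unif a b) = (b - a)⁻¹ * ∫ x in a..b, f x := by
  rw [unif, integral_smul_measure, MeasureTheory.integral_Icc_eq_integral_Ioc,
    ← intervalIntegral.integral_of_le h.le, ENNReal.toReal_inv,
    ENNReal.toReal_ofReal (by linarith), smul_eq_mul]

open intervalIntegral in
lemma unif_quad (μ σ A B C : ℝ) (hσ : 0 < σ) :
    ∫ x, (A * x ^ 2 + B * x + C) ∂(unif (μ - Real.sqrt 3 * σ) (μ + Real.sqrt 3 * σ)) =
      A * (μ ^ 2 + σ ^ 2) + B * μ + C := by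
  have hs3 : (0:ℝ) < Real.sqrt 3 := Real.sqrt_pos.2 (by norm_num)
  have h3 : Real.sqrt 3 ^ 2 = 3 := Real.sq_sqrt (by norm_num)
  have hab : μ - Real.sqrt 3 * σ < μ + Real.sqrt 3 * σ := by nlinarith
  rw [integral_unif hab]
  have h1 : ∀ a b : ℝ, (∫ x in a..b, (A * x ^ 2 + B * x + C)) =
      A * ((b ^ 3 - a ^ 3) / 3) + B * ((b ^ 2 - a ^ 2) / 2) + C * (b - a) := by
    intro a b
    have i1 : IntervalIntegrable (fun x : ℝ => A * x ^ 2) volume a b :=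
      (by continuity : Continuous fun x : ℝ => A * x ^ 2).intervalIntegrable a b
    have i2 : IntervalIntegrable (fun x : ℝ => B * x) volume a b :=
      (by continuity : Continuous fun x : ℝ => B * x).intervalIntegrable a b
    have i3 : IntervalIntegrable (fun _ : ℝ => C) volume a b :=
      intervalIntegrable_const
    rw [intervalIntegral.integral_add (i1.add i2) i3, intervalIntegral.integral_add i1 i2,
      intervalIntegral.integral_const_mul, intervalIntegral.integral_const_mul,
      intervalIntegral.integral_const]
    have e1 : (∫ x in a..b, x ^ 2) = (b ^ 3 - a ^ 3) / 3 := by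
      simp [integral_pow]; ring
    have e2 : (∫ x in a..b, x) = (b ^ 2 - a ^ 2) / 2 :=
      integral_id
    rw [e1, e2]; simp [smul_eq_mul]; ring
  rw [h1]
  have hne : Real.sqrt 3 * σ ≠ 0 := by positivity
  have h33 : Real.sqrt 3 ^ 3 = 3 * Real.sqrt 3 := by
    rw [pow_succ, h3]
  field_simp
  ring_nf
  rw [h33]
  ring

lemma map_unif {a₁ b₁ a₂ b₂ k c : ℝ} (hk : 0 < k) (h1 : a₁ < b₁)
    (ha : k * a₁ + c = a₂) (hb : k * b₁ + c = b₂) :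
    (unif a₁ b₁).map (fun x => k * x + c) = unif a₂ b₂ := by
  have hmeas : Measurable (fun x : ℝ => k * x + c) :=
    (measurable_const_mul k).add_const c
  have hpre : (fun x : ℝ => k * x + c) ⁻¹' Set.Icc a₂ b₂ = Set.Icc a₁ b₁ := by
    ext x
    simp only [Set.mem_preimage, Set.mem_Icc, ← ha, ← hb]
    constructor
    · rintro ⟨u, v⟩
      constructor <;> nlinarith
    · rintro ⟨u, v⟩
      constructor <;> nlinarith
  have hvol : volume.map (fun x : ℝ => k * x + c) = ENNReal.ofReal k⁻¹ • volume := by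
    have hc : (fun x : ℝ => k * x + c) = (fun y : ℝ => c + y) ∘ (fun x : ℝ => k * x) := by
      funext x; simp [add_comm]
    rw [hc, ← Measure.map_map (measurable_const_add c) (measurable_const_mul k)]
    rw [show (fun x : ℝ => k * x) = (k * ·) from rfl, Real.map_volume_mul_left hk.ne',
      Measure.map_smul, Measure.IsAddLeftInvariant.map_add_left_eq_self (μ := volume) c, abs_of_pos (inv_pos.2 hk)]
  rw [unif, Measure.map_smul, ← hpre, ← Measure.restrict_map hmeas measurableSet_Icc, hvol,
    Measure.restrict_smul, smul_smul, unif]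
  congr 1
  have hba : b₂ - a₂ = k * (b₁ - a₁) := by rw [← ha, ← hb]; ring
  rw [hba, ENNReal.ofReal_mul hk.le, ENNReal.mul_inv (Or.inl (by simp [hk])) (Or.inl ENNReal.ofReal_ne_top), ← ENNReal.ofReal_inv_of_pos hk, mul_comm]

set_option maxHeartbeats 1000000
/-- The squared 2-Wasserstein distance between the uniform distributions
U[μ₁ - √3σ₁, μ₁ + √3σ₁] and U[μ₂ - √3σ₂, μ₂ + √3σ₂] equals (μ₁ - μ₂)² + (σ₁ - σ₂)². -/
theorem W2sq_unif_unif (μ₁ μ₂ σ₁ σ₂ : ℝ) (hσ₁ : 0 < σ₁) (hσ₂ : 0 < σ₂) :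
    W2sq (unif (μ₁ - Real.sqrt 3 * σ₁) (μ₁ + Real.sqrt 3 * σ₁))
         (unif (μ₂ - Real.sqrt 3 * σ₂) (μ₂ + Real.sqrt 3 * σ₂)) =
      (μ₁ - μ₂) ^ 2 + (σ₁ - σ₂) ^ 2 := by
  have hs3 : (0:ℝ) < Real.sqrt 3 := Real.sqrt_pos.2 (by norm_num)
  set a₁ := μ₁ - Real.sqrt 3 * σ₁ with ha₁
  set b₁ := μ₁ + Real.sqrt 3 * σ₁ with hb₁
  set a₂ := μ₂ - Real.sqrt 3 * σ₂ with ha₂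
  set b₂ := μ₂ + Real.sqrt 3 * σ₂ with hb₂
  have hab₁ : a₁ < b₁ := by rw [ha₁, hb₁]; nlinarith
  have hab₂ : a₂ < b₂ := by rw [ha₂, hb₂]; nlinarith
  set k := σ₂ / σ₁ with hkdef
  have hk : 0 < k := div_pos hσ₂ hσ₁
  set c₀ := μ₂ - k * μ₁ with hc₀
  set p := unif a₁ b₁ with hp
  set q := unif a₂ b₂ with hq
  have hpprob : IsProbabilityMeasure p := unif_prob hab₁
  have hqprob : IsProbabilityMeasure q := unif_prob hab₂
  set T : ℝ → ℝ := fun x => k * x + c₀ with hT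
  have hTmeas : Measurable T := hT ▸ (measurable_const_mul k).add_const c₀
  have hTmap : p.map T = q := by
    rw [hp, hq]
    refine map_unif hk hab₁ ?_ ?_
    · rw [ha₁, ha₂, hc₀, hkdef]; field_simp; ring
    · rw [hb₁, hb₂, hc₀, hkdef]; field_simp; ring
  set tgt := (μ₁ - μ₂) ^ 2 + (σ₁ - σ₂) ^ 2 with htgt
  -- the dual potentials
  set φ : ℝ → ℝ := fun x => (1 - k) * x ^ 2 + (-2 * c₀) * x + 0 with hφ
  set ψ : ℝ → ℝ := fun y => (1 - k⁻¹) * y ^ 2 + (2 * c₀ / k) * y + (-c₀ ^ 2 / k) with hψ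
  clear_value ψ φ tgt T q p c₀ k b₂ a₂ b₁ a₁
  have hφc : Continuous φ := by rw [hφ]; continuity
  have hψc : Continuous ψ := by rw [hψ]; continuity
  have hφint : ∫ x, φ x ∂p = (1 - k) * (μ₁ ^ 2 + σ₁ ^ 2) + (-2 * c₀) * μ₁ + 0 := by
    rw [hp, ha₁, hb₁, hφ]; exact unif_quad μ₁ σ₁ _ _ _ hσ₁
  have hψint : ∫ y, ψ y ∂q = (1 - k⁻¹) * (μ₂ ^ 2 + σ₂ ^ 2) + (2 * c₀ / k) * μ₂ + (-c₀ ^ 2 / k) := by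
    rw [hq, ha₂, hb₂, hψ]; exact unif_quad μ₂ σ₂ _ _ _ hσ₂
  have hsum : ∫ x, φ x ∂p + ∫ y, ψ y ∂q = tgt := by
    rw [hφint, hψint, htgt, hc₀, hkdef]
    field_simp
    ring
  have hpoint : ∀ z : ℝ × ℝ, φ z.1 + ψ z.2 ≤ ‖z.1 - z.2‖ ^ 2 := by
    intro z
    rw [Real.norm_eq_abs, sq_abs]
    have key : (z.1 - z.2) ^ 2 - (φ z.1 + ψ z.2) = (k * z.1 + c₀ - z.2) ^ 2 / k := by
      rw [hφ, hψ]; field_simp; ring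
    linarith [key, div_nonneg (sq_nonneg (k * z.1 + c₀ - z.2)) hk.le]
  -- membership: the monotone coupling
  have hcost : ∫ x, ‖x - T x‖ ^ 2 ∂p = tgt := by
    have e : (fun x : ℝ => ‖x - T x‖ ^ 2) =
        fun x => (1 - k) ^ 2 * x ^ 2 + (-2 * (1 - k) * c₀) * x + c₀ ^ 2 := by
      funext x
      rw [Real.norm_eq_abs, sq_abs, hT]
      ring
    rw [e, hp, ha₁, hb₁, unif_quad μ₁ σ₁ _ _ _ hσ₁, htgt, hc₀, hkdef]
    field_simp
    ring
  have hmem : tgt ∈ { c | ∃ γ : Measure (ℝ × ℝ), IsProbabilityMeasure γ ∧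
      γ.map Prod.fst = p ∧ γ.map Prod.snd = q ∧ c = ∫ z, ‖z.1 - z.2‖ ^ 2 ∂γ } := by
    have hpair : Measurable (fun x : ℝ => (x, T x)) := measurable_id.prodMk hTmeas
    refine ⟨p.map (fun x => (x, T x)), ?_, ?_, ?_, ?_⟩
    · exact Measure.isProbabilityMeasure_map hpair.aemeasurable
    · rw [Measure.map_map measurable_fst hpair]
      have e : (Prod.fst ∘ fun x : ℝ => (x, T x)) = id := rfl
      rw [e, Measure.map_id]
    · rw [Measure.map_map measurable_snd hpair]
      have e : (Prod.snd ∘ fun x : ℝ => (x, T x)) = T := rfl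
      rw [e, hTmap]
    · rw [integral_map (f := fun z : ℝ × ℝ => ‖z.1 - z.2‖ ^ 2) hpair.aemeasurable
        ((continuous_fst.sub continuous_snd).norm.pow 2).aestronglyMeasurable]
      exact hcost.symm
  -- lower bound
  have hlb : ∀ c ∈ { c | ∃ γ : Measure (ℝ × ℝ), IsProbabilityMeasure γ ∧
      γ.map Prod.fst = p ∧ γ.map Prod.snd = q ∧ c = ∫ z, ‖z.1 - z.2‖ ^ 2 ∂γ }, tgt ≤ c := by
    rintro c ⟨γ, hγprob, hγ1, hγ2, rfl⟩
    have hφγ : Integrable (fun z : ℝ × ℝ => φ z.1) γ := by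
      have : Integrable φ (γ.map Prod.fst) := by
        rw [hγ1, hp]; exact integrable_unif hab₁ hφc
      exact (integrable_map_measure hφc.aestronglyMeasurable
        measurable_fst.aemeasurable).mp this
    have hψγ : Integrable (fun z : ℝ × ℝ => ψ z.2) γ := by
      have : Integrable ψ (γ.map Prod.snd) := by
        rw [hγ2, hq]; exact integrable_unif hab₂ hψc
      exact (integrable_map_measure hψc.aestronglyMeasurable
        measurable_snd.aemeasurable).mp this
    -- a.e. support
    have hae1 : ∀ᵐ z : ℝ × ℝ ∂γ, z.1 ∈ Set.Icc a₁ b₁ := by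
      rw [ae_iff]
      have : {z : ℝ × ℝ | ¬ z.1 ∈ Set.Icc a₁ b₁} = Prod.fst ⁻¹' (Set.Icc a₁ b₁)ᶜ := rfl
      rw [this, ← Measure.map_apply measurable_fst measurableSet_Icc.compl, hγ1, hp]
      exact unif_compl hab₁
    have hae2 : ∀ᵐ z : ℝ × ℝ ∂γ, z.2 ∈ Set.Icc a₂ b₂ := by
      rw [ae_iff]
      have : {z : ℝ × ℝ | ¬ z.2 ∈ Set.Icc a₂ b₂} = Prod.snd ⁻¹' (Set.Icc a₂ b₂)ᶜ := rfl
      rw [this, ← Measure.map_apply measurable_snd measurableSet_Icc.compl, hγ2, hq]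
      exact unif_compl hab₂
    have hcostint : Integrable (fun z : ℝ × ℝ => ‖z.1 - z.2‖ ^ 2) γ := by
      refine Integrable.mono' (integrable_const ((b₁ - a₂) ^ 2 + (b₂ - a₁) ^ 2))
        ((continuous_fst.sub continuous_snd).norm.pow 2).aestronglyMeasurable ?_
      filter_upwards [hae1, hae2] with z h1 h2
      rw [Real.norm_eq_abs, Real.norm_eq_abs, sq_abs, abs_of_nonneg (sq_nonneg _)]
      obtain ⟨u1, v1⟩ := h1
      obtain ⟨u2, v2⟩ := h2
      rcases le_total z.1 z.2 with h | h
      · have hm : (0:ℝ) ≤ (b₂ - a₁ - (z.2 - z.1)) * (b₂ - a₁ + (z.2 - z.1)) :=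
          mul_nonneg (by linarith) (by linarith)
        nlinarith [sq_nonneg (b₁ - a₂)]
      · have hm : (0:ℝ) ≤ (b₁ - a₂ - (z.1 - z.2)) * (b₁ - a₂ + (z.1 - z.2)) :=
          mul_nonneg (by linarith) (by linarith)
        nlinarith [sq_nonneg (b₂ - a₁)]
    calc tgt = ∫ x, φ x ∂p + ∫ y, ψ y ∂q := hsum.symm
      _ = ∫ z : ℝ × ℝ, φ z.1 ∂γ + ∫ z : ℝ × ℝ, ψ z.2 ∂γ := by
          rw [← hγ1, ← hγ2,
            integral_map measurable_fst.aemeasurable hφc.aestronglyMeasurable,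
            integral_map measurable_snd.aemeasurable hψc.aestronglyMeasurable]
      _ = ∫ z : ℝ × ℝ, (φ z.1 + ψ z.2) ∂γ := (integral_add hφγ hψγ).symm
      _ ≤ ∫ z : ℝ × ℝ, ‖z.1 - z.2‖ ^ 2 ∂γ :=
          integral_mono (hφγ.add hψγ) hcostint hpoint
  unfold W2sq
  refine le_antisymm (csInf_le ⟨tgt, fun c hc => hlb c hc⟩ hmem) (le_csInf ⟨tgt, hmem⟩ hlb)
end

section
/- Let μ₁, μ₂ ∈ ℝ and σ₁, σ₂ > 0. Then the squared 2-Wasserstein distance between the Gaussian measures satisfies W₂²(gaussianReal μ₁ σ₁², gaussianReal μ₂ σ₂²) = (μ₁ − μ₂)² + (σ₁ − σ₂)². -/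
open MeasureTheory ProbabilityTheory
open scoped ENNReal NNReal

open Real Filter

private lemma integrable_sq_exp : Integrable (fun x : ℝ => x ^ 2 * rexp (-(1/2) * x ^ 2)) := by
  have h := integrable_rpow_mul_exp_neg_mul_sq (b := 1/2) one_half_pos (s := 2) (by norm_num)
  have h2 : ∀ y : ℝ, y ^ (2:ℝ) = y ^ (2:ℕ) := fun y => by
    rw [← Real.rpow_natCast y 2]; norm_num
  refine h.congr (Filter.Eventually.of_forall fun x => ?_)
  simp [h2]

private lemma integral_sq_exp : ∫ x : ℝ, x ^ 2 * rexp (-(1/2) * x ^ 2) = √(2 * π) := by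
  have hexp : Integrable (fun x : ℝ => rexp (-(1/2) * x ^ 2)) :=
    integrable_exp_neg_mul_sq one_half_pos
  have hderiv : ∀ x : ℝ, HasDerivAt (fun x : ℝ => -(x * rexp (-(1/2) * x ^ 2)))
      ((x ^ 2 - 1) * rexp (-(1/2) * x ^ 2)) x := by
    intro x
    have h1 : HasDerivAt (fun x : ℝ => -(1/2) * x ^ 2) (-(1/2) * (2 * x ^ 1)) x :=
      (hasDerivAt_pow 2 x).const_mul _
    have h2 := h1.exp
    have h3 : HasDerivAt (fun x : ℝ => -(x * rexp (-(1/2) * x ^ 2))) (-(1 * rexp (-(1/2) * x ^ 2) + id x * (rexp (-(1/2) * x ^ 2) * (-(1/2) * (2 * x ^ 1))))) x :=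
      ((hasDerivAt_id x).mul h2).neg
    convert h3 using 1
    simp only [id_eq, pow_one]
    ring
  have hint : Integrable (fun x : ℝ => (x ^ 2 - 1) * rexp (-(1/2) * x ^ 2)) := by
    refine (integrable_sq_exp.sub hexp).congr (Filter.Eventually.of_forall fun x => ?_)
    simp only [Pi.sub_apply]
    ring
  have hc := tendsto_rpow_abs_mul_exp_neg_mul_sq_cocompact (a := 1/2) one_half_pos 1
  rw [cocompact_eq_atBot_atTop] at hc
  have habs : (fun x : ℝ => ‖-(x * rexp (-(1/2) * x ^ 2))‖)
      = fun x : ℝ => |x| ^ (1:ℝ) * rexp (-(1/2) * x ^ 2) := by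
    funext x
    rw [norm_neg, Real.norm_eq_abs, abs_mul, abs_of_pos (exp_pos _), Real.rpow_one]
  have hbot : Tendsto (fun x : ℝ => -(x * rexp (-(1/2) * x ^ 2))) atBot (nhds 0) := by
    rw [tendsto_zero_iff_norm_tendsto_zero, habs]
    exact hc.mono_left le_sup_left
  have htop : Tendsto (fun x : ℝ => -(x * rexp (-(1/2) * x ^ 2))) atTop (nhds 0) := by
    rw [tendsto_zero_iff_norm_tendsto_zero, habs]
    exact hc.mono_left le_sup_right
  have key := integral_of_hasDerivAt_of_tendsto hderiv hint hbot htop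
  have hgauss : ∫ x : ℝ, rexp (-(1/2) * x ^ 2) = √(2 * π) := by
    rw [integral_gaussian, show π/(1/2) = 2*π by ring]
  have hsplit : ∀ x : ℝ, x ^ 2 * rexp (-(1/2) * x ^ 2)
      = (x ^ 2 - 1) * rexp (-(1/2) * x ^ 2) + rexp (-(1/2) * x ^ 2) := fun x => by ring
  rw [integral_congr_ae (Filter.Eventually.of_forall hsplit), integral_add hint hexp, key, hgauss]
  ring

private lemma nu_withDensity :
    gaussianReal 0 1 = MeasureTheory.volume.withDensity
      (fun x => ((Real.toNNReal (gaussianPDFReal 0 1 x) : ℝ≥0) : ℝ≥0∞)) := by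
  rw [gaussianReal_of_var_ne_zero 0 one_ne_zero]
  rfl

private lemma nu_pdf_eq (x : ℝ) :
    gaussianPDFReal 0 1 x = (√(2 * π))⁻¹ * rexp (-(1/2) * x ^ 2) := by
  rw [gaussianPDFReal]
  norm_num
  exact Or.inl (by ring)

private lemma nu_integral (g : ℝ → ℝ) :
    ∫ x, g x ∂(gaussianReal 0 1) = ∫ x, gaussianPDFReal 0 1 x * g x := by
  rw [nu_withDensity,
    integral_withDensity_eq_integral_smul (measurable_gaussianPDFReal 0 1).real_toNNReal g]
  congr 1
  funext x
  simp [NNReal.smul_def, Real.coe_toNNReal _ (gaussianPDFReal_nonneg 0 1 x)]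

private lemma nu_integrable (g : ℝ → ℝ)
    (hg : Integrable (fun x => gaussianPDFReal 0 1 x * g x)) :
    Integrable g (gaussianReal 0 1) := by
  rw [nu_withDensity,
    integrable_withDensity_iff_integrable_smul (measurable_gaussianPDFReal 0 1).real_toNNReal]
  refine hg.congr (Filter.Eventually.of_forall fun x => ?_)
  simp [NNReal.smul_def, Real.coe_toNNReal _ (gaussianPDFReal_nonneg 0 1 x)]

private lemma nu_int_id : Integrable (fun x : ℝ => x) (gaussianReal 0 1) := by
  refine nu_integrable _ ?_
  have h := (integrable_mul_exp_neg_mul_sq (b := 1/2) one_half_pos).const_mul (√(2 * π))⁻¹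
  refine h.congr (Filter.Eventually.of_forall fun x => ?_)
  simp only [nu_pdf_eq]; ring

private lemma nu_int_sq : Integrable (fun x : ℝ => x ^ 2) (gaussianReal 0 1) := by
  refine nu_integrable _ ?_
  have h := integrable_sq_exp.const_mul (√(2 * π))⁻¹
  refine h.congr (Filter.Eventually.of_forall fun x => ?_)
  simp only [nu_pdf_eq]; ring

private lemma nu_integral_id : ∫ x, x ∂(gaussianReal 0 1) = 0 := by
  rw [nu_integral]
  have hmp := (Measure.measurePreserving_neg (volume : Measure ℝ)).integral_comp
    (Homeomorph.neg ℝ).measurableEmbedding (fun x => gaussianPDFReal 0 1 x * x)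
  have heq : ∀ x : ℝ, gaussianPDFReal 0 1 (-x) * (-x) = -(gaussianPDFReal 0 1 x * x) := by
    intro x
    rw [nu_pdf_eq, nu_pdf_eq, neg_pow]
    ring_nf
  simp only [heq, integral_neg] at hmp
  linarith

private lemma nu_integral_sq : ∫ x, x ^ 2 ∂(gaussianReal 0 1) = 1 := by
  rw [nu_integral]
  have : ∀ x : ℝ, gaussianPDFReal 0 1 x * x ^ 2
      = (√(2 * π))⁻¹ * (x ^ 2 * rexp (-(1/2) * x ^ 2)) := by
    intro x; rw [nu_pdf_eq]; ring
  rw [integral_congr_ae (Filter.Eventually.of_forall this), integral_const_mul, integral_sq_exp,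
    inv_mul_cancel₀]
  positivity

private lemma gaussian_eq_map (m s : ℝ) (hs : 0 < s) :
    gaussianReal m (Real.toNNReal (s ^ 2))
      = (gaussianReal 0 1).map (fun x => m + s * x) := by
  have hnn : (⟨s ^ 2, sq_nonneg s⟩ : ℝ≥0) * 1 = Real.toNNReal (s ^ 2) := by
    ext
    simp [Real.coe_toNNReal _ (sq_nonneg s)]
  have h1 : (gaussianReal 0 1).map (s * ·) = gaussianReal 0 (Real.toNNReal (s ^ 2)) := by
    rw [gaussianReal_map_const_mul (μ := 0) (v := 1) s, mul_zero]
    exact congrArg _ hnn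
  have h2 : ((gaussianReal 0 1).map (s * ·)).map (m + ·)
      = gaussianReal m (Real.toNNReal (s ^ 2)) := by
    rw [h1, gaussianReal_map_const_add (μ := 0) m, zero_add]
  rw [← h2, Measure.map_map (show Measurable (fun x : ℝ => m + x) from measurable_const.add measurable_id') (measurable_id'.const_mul s)]
  rfl

private lemma gaussian_int_sub (m s : ℝ) (hs : 0 < s) :
    Integrable (fun x => x - m) (gaussianReal m (Real.toNNReal (s ^ 2))) := by
  rw [gaussian_eq_map m s hs]
  rw [integrable_map_measure (show Measurable (fun x : ℝ => x - m) from measurable_id'.sub measurable_const).aestronglyMeasurable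
    (show Measurable (fun x : ℝ => m + s * x) from measurable_const.add (measurable_id'.const_mul s)).aemeasurable]
  refine (nu_int_id.const_mul s).congr (Filter.Eventually.of_forall fun x => ?_)
  simp [Function.comp]

private lemma gaussian_int_sq_sub (m s : ℝ) (hs : 0 < s) :
    Integrable (fun x => (x - m) ^ 2) (gaussianReal m (Real.toNNReal (s ^ 2))) := by
  rw [gaussian_eq_map m s hs]
  rw [integrable_map_measure (show Measurable (fun x : ℝ => (x - m) ^ 2) from (measurable_id'.sub measurable_const).pow_const 2).aestronglyMeasurable
    (show Measurable (fun x : ℝ => m + s * x) from measurable_const.add (measurable_id'.const_mul s)).aemeasurable]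
  refine (nu_int_sq.const_mul (s ^ 2)).congr (Filter.Eventually.of_forall fun x => ?_)
  simp [Function.comp]
  ring

private lemma gaussian_int_sq (m s : ℝ) (hs : 0 < s) :
    Integrable (fun x => x ^ 2) (gaussianReal m (Real.toNNReal (s ^ 2))) := by
  rw [gaussian_eq_map m s hs]
  rw [integrable_map_measure (measurable_id'.pow_const 2).aestronglyMeasurable
    (show Measurable (fun x : ℝ => m + s * x) from measurable_const.add (measurable_id'.const_mul s)).aemeasurable]
  have h := ((nu_int_sq.const_mul (s ^ 2)).add ((nu_int_id.const_mul (2 * m * s)).add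
    (integrable_const (m ^ 2)))).congr
    (Filter.Eventually.of_forall
      (show ∀ x : ℝ, s ^ 2 * x ^ 2 + (2 * m * s * x + m ^ 2) = ((fun x => x ^ 2) ∘
        fun a => m + s * a) x from fun x => by simp [Function.comp]; ring))
  exact h

private lemma gaussian_integral_sub (m s : ℝ) (hs : 0 < s) :
    ∫ x, x - m ∂(gaussianReal m (Real.toNNReal (s ^ 2))) = 0 := by
  rw [gaussian_eq_map m s hs,
    integral_map (show Measurable (fun x : ℝ => m + s * x) from measurable_const.add (measurable_id'.const_mul s)).aemeasurable
      (show Measurable (fun x : ℝ => x - m) from measurable_id'.sub measurable_const).aestronglyMeasurable]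
  have : ∀ x : ℝ, m + s * x - m = s * x := fun x => by ring
  simp only [this]
  rw [integral_const_mul, nu_integral_id, mul_zero]

private lemma gaussian_integral_sq_sub (m s : ℝ) (hs : 0 < s) :
    ∫ x, (x - m) ^ 2 ∂(gaussianReal m (Real.toNNReal (s ^ 2))) = s ^ 2 := by
  rw [gaussian_eq_map m s hs,
    integral_map (show Measurable (fun x : ℝ => m + s * x) from measurable_const.add (measurable_id'.const_mul s)).aemeasurable
      (show Measurable (fun x : ℝ => (x - m) ^ 2) from (measurable_id'.sub measurable_const).pow_const 2).aestronglyMeasurable]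
  have : ∀ x : ℝ, (m + s * x - m) ^ 2 = s ^ 2 * x ^ 2 := fun x => by ring
  simp only [this]
  rw [integral_const_mul, nu_integral_sq, mul_one]

private lemma ptwise {σ₁ σ₂ : ℝ} (hσ₁ : 0 < σ₁) (hσ₂ : 0 < σ₂) (a u w : ℝ) :
    a ^ 2 + (2 * a * (u - w) + ((1 - σ₂/σ₁) * u ^ 2 + (1 - σ₁/σ₂) * w ^ 2))
      ≤ (a + (u - w)) ^ 2 := by
  have key : 2 * u * w ≤ σ₂/σ₁ * u ^ 2 + σ₁/σ₂ * w ^ 2 := by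
    rw [div_mul_eq_mul_div, div_mul_eq_mul_div, div_add_div _ _ hσ₁.ne' hσ₂.ne',
      le_div_iff₀ (by positivity)]
    nlinarith [sq_nonneg (σ₂ * u - σ₁ * w)]
  nlinarith [key]

/-- The squared 2-Wasserstein distance between the Gaussian measures N(μ₁, σ₁²) and
N(μ₂, σ₂²) equals (μ₁ - μ₂)² + (σ₁ - σ₂)². -/
theorem W2sq_gaussian_gaussian (μ₁ μ₂ σ₁ σ₂ : ℝ) (hσ₁ : 0 < σ₁) (hσ₂ : 0 < σ₂) :
    W2sq (gaussianReal μ₁ (Real.toNNReal (σ₁ ^ 2)))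
         (gaussianReal μ₂ (Real.toNNReal (σ₂ ^ 2))) =
      (μ₁ - μ₂) ^ 2 + (σ₁ - σ₂) ^ 2 := by
  have hmem : ∃ γ : Measure (ℝ × ℝ), IsProbabilityMeasure γ ∧
      γ.map Prod.fst = gaussianReal μ₁ (Real.toNNReal (σ₁ ^ 2)) ∧
      γ.map Prod.snd = gaussianReal μ₂ (Real.toNNReal (σ₂ ^ 2)) ∧
      ((μ₁ - μ₂) ^ 2 + (σ₁ - σ₂) ^ 2) = ∫ z : ℝ × ℝ, ‖z.1 - z.2‖ ^ 2 ∂γ := by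
    have hF : Measurable (fun x : ℝ => ((μ₁ + σ₁ * x, μ₂ + σ₂ * x) : ℝ × ℝ)) :=
      (measurable_const.add (measurable_id'.const_mul σ₁)).prodMk
        (measurable_const.add (measurable_id'.const_mul σ₂))
    refine ⟨(gaussianReal 0 1).map (fun x => (μ₁ + σ₁ * x, μ₂ + σ₂ * x)), ?_, ?_, ?_, ?_⟩
    · exact Measure.isProbabilityMeasure_map hF.aemeasurable
    · rw [Measure.map_map measurable_fst hF, gaussian_eq_map μ₁ σ₁ hσ₁]; rfl
    · rw [Measure.map_map measurable_snd hF, gaussian_eq_map μ₂ σ₂ hσ₂]; rfl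
    · rw [integral_map hF.aemeasurable
        ((show Measurable (fun z : ℝ × ℝ => ‖z.1 - z.2‖ ^ 2) from (measurable_fst.sub measurable_snd).norm.pow_const 2).aestronglyMeasurable)]
      have h1 : ∀ x : ℝ, ‖(μ₁ + σ₁ * x) - (μ₂ + σ₂ * x)‖ ^ 2
          = (μ₁ - μ₂) ^ 2 + ((2 * (μ₁ - μ₂) * (σ₁ - σ₂)) * x + (σ₁ - σ₂) ^ 2 * x ^ 2) := by
        intro x
        rw [Real.norm_eq_abs, sq_abs]
        ring
      simp only [h1]
      have hI1 : Integrable (fun x : ℝ => 2 * (μ₁ - μ₂) * (σ₁ - σ₂) * x) (gaussianReal 0 1) :=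
        nu_int_id.const_mul _
      have hI2 : Integrable (fun x : ℝ => (σ₁ - σ₂) ^ 2 * x ^ 2) (gaussianReal 0 1) :=
        nu_int_sq.const_mul _
      have hI3 : Integrable (fun x : ℝ => 2 * (μ₁ - μ₂) * (σ₁ - σ₂) * x
          + (σ₁ - σ₂) ^ 2 * x ^ 2) (gaussianReal 0 1) := hI1.add hI2
      rw [integral_add (integrable_const _) hI3, integral_add hI1 hI2,
        integral_const_mul, integral_const_mul, nu_integral_id, nu_integral_sq, integral_const]
      simp
  have hlb : ∀ c : ℝ, (∃ γ : Measure (ℝ × ℝ), IsProbabilityMeasure γ ∧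
      γ.map Prod.fst = gaussianReal μ₁ (Real.toNNReal (σ₁ ^ 2)) ∧
      γ.map Prod.snd = gaussianReal μ₂ (Real.toNNReal (σ₂ ^ 2)) ∧
      c = ∫ z : ℝ × ℝ, ‖z.1 - z.2‖ ^ 2 ∂γ) →
      (μ₁ - μ₂) ^ 2 + (σ₁ - σ₂) ^ 2 ≤ c := by
    rintro c ⟨γ, hγ, hfst, hsnd, rfl⟩
    have key₁ : ∀ f : ℝ → ℝ, Measurable f →
        ∫ z : ℝ × ℝ, f z.1 ∂γ = ∫ x, f x ∂(gaussianReal μ₁ (Real.toNNReal (σ₁ ^ 2))) := by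
      intro f hf
      rw [← hfst, integral_map measurable_fst.aemeasurable hf.aestronglyMeasurable]
    have key₂ : ∀ f : ℝ → ℝ, Measurable f →
        ∫ z : ℝ × ℝ, f z.2 ∂γ = ∫ x, f x ∂(gaussianReal μ₂ (Real.toNNReal (σ₂ ^ 2))) := by
      intro f hf
      rw [← hsnd, integral_map measurable_snd.aemeasurable hf.aestronglyMeasurable]
    have int₁ : ∀ f : ℝ → ℝ, Measurable f →
        Integrable f (gaussianReal μ₁ (Real.toNNReal (σ₁ ^ 2))) →
        Integrable (fun z : ℝ × ℝ => f z.1) γ := by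
      intro f hf hfi
      rw [← hfst] at hfi
      exact (integrable_map_measure hf.aestronglyMeasurable measurable_fst.aemeasurable).mp hfi
    have int₂ : ∀ f : ℝ → ℝ, Measurable f →
        Integrable f (gaussianReal μ₂ (Real.toNNReal (σ₂ ^ 2))) →
        Integrable (fun z : ℝ × ℝ => f z.2) γ := by
      intro f hf hfi
      rw [← hsnd] at hfi
      exact (integrable_map_measure hf.aestronglyMeasurable measurable_snd.aemeasurable).mp hfi
    have hmeas₁ : Measurable (fun x : ℝ => x - μ₁) := measurable_id'.sub measurable_const
    have hmeas₂ : Measurable (fun x : ℝ => x - μ₂) := measurable_id'.sub measurable_const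
    have A : Integrable (fun z : ℝ × ℝ => z.1 - μ₁) γ :=
      int₁ _ hmeas₁ (gaussian_int_sub μ₁ σ₁ hσ₁)
    have B : Integrable (fun z : ℝ × ℝ => z.2 - μ₂) γ :=
      int₂ _ hmeas₂ (gaussian_int_sub μ₂ σ₂ hσ₂)
    have C : Integrable (fun z : ℝ × ℝ => (z.1 - μ₁) ^ 2) γ :=
      int₁ _ (hmeas₁.pow_const 2) (gaussian_int_sq_sub μ₁ σ₁ hσ₁)
    have D : Integrable (fun z : ℝ × ℝ => (z.2 - μ₂) ^ 2) γ :=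
      int₂ _ (hmeas₂.pow_const 2) (gaussian_int_sq_sub μ₂ σ₂ hσ₂)
    have hH₁ : Integrable (fun z : ℝ × ℝ => (z.1 - μ₁) - (z.2 - μ₂)) γ := A.sub B
    have hH₂ : Integrable (fun z : ℝ × ℝ => 2 * (μ₁ - μ₂) * ((z.1 - μ₁) - (z.2 - μ₂))) γ :=
      hH₁.const_mul _
    have hH₃ : Integrable (fun z : ℝ × ℝ => (1 - σ₂/σ₁) * (z.1 - μ₁) ^ 2) γ := C.const_mul _
    have hH₄ : Integrable (fun z : ℝ × ℝ => (1 - σ₁/σ₂) * (z.2 - μ₂) ^ 2) γ := D.const_mul _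
    have hH₅ : Integrable (fun z : ℝ × ℝ => (1 - σ₂/σ₁) * (z.1 - μ₁) ^ 2
        + (1 - σ₁/σ₂) * (z.2 - μ₂) ^ 2) γ := hH₃.add hH₄
    have hH₆ : Integrable (fun z : ℝ × ℝ => 2 * (μ₁ - μ₂) * ((z.1 - μ₁) - (z.2 - μ₂))
        + ((1 - σ₂/σ₁) * (z.1 - μ₁) ^ 2 + (1 - σ₁/σ₂) * (z.2 - μ₂) ^ 2)) γ := hH₂.add hH₅
    have hH : Integrable (fun z : ℝ × ℝ => (μ₁ - μ₂) ^ 2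
        + (2 * (μ₁ - μ₂) * ((z.1 - μ₁) - (z.2 - μ₂))
          + ((1 - σ₂/σ₁) * (z.1 - μ₁) ^ 2 + (1 - σ₁/σ₂) * (z.2 - μ₂) ^ 2))) γ :=
      (integrable_const _).add hH₆
    have hG : Integrable (fun z : ℝ × ℝ => (z.1 - z.2) ^ 2) γ := by
      have hsq₁ : Integrable (fun z : ℝ × ℝ => z.1 ^ 2) γ :=
        int₁ _ (measurable_id'.pow_const 2) (gaussian_int_sq μ₁ σ₁ hσ₁)
      have hsq₂ : Integrable (fun z : ℝ × ℝ => z.2 ^ 2) γ :=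
        int₂ _ (measurable_id'.pow_const 2) (gaussian_int_sq μ₂ σ₂ hσ₂)
      have hGd : Integrable (fun z : ℝ × ℝ => 2 * z.1 ^ 2 + 2 * z.2 ^ 2) γ :=
        (hsq₁.const_mul 2).add (hsq₂.const_mul 2)
      refine hGd.mono'
        (((measurable_fst.sub measurable_snd).pow_const 2).aestronglyMeasurable)
        (Filter.Eventually.of_forall fun z => ?_)
      rw [Real.norm_eq_abs, abs_of_nonneg (sq_nonneg _)]
      nlinarith [sq_nonneg (z.1 + z.2)]
    have hnorm : ∀ z : ℝ × ℝ, ‖z.1 - z.2‖ ^ 2 = (z.1 - z.2) ^ 2 := fun z => by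
      rw [Real.norm_eq_abs, sq_abs]
    simp only [hnorm]
    have hle : ∫ z : ℝ × ℝ, ((μ₁ - μ₂) ^ 2
        + (2 * (μ₁ - μ₂) * ((z.1 - μ₁) - (z.2 - μ₂))
          + ((1 - σ₂/σ₁) * (z.1 - μ₁) ^ 2 + (1 - σ₁/σ₂) * (z.2 - μ₂) ^ 2))) ∂γ
        ≤ ∫ z : ℝ × ℝ, (z.1 - z.2) ^ 2 ∂γ := by
      refine integral_mono hH hG fun z => ?_
      have h := ptwise hσ₁ hσ₂ (μ₁ - μ₂) (z.1 - μ₁) (z.2 - μ₂)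
      have heq : (μ₁ - μ₂) + ((z.1 - μ₁) - (z.2 - μ₂)) = z.1 - z.2 := by ring
      rw [heq] at h
      exact h
    have e₁ : ∫ z : ℝ × ℝ, (z.1 - μ₁) ∂γ = 0 :=
      (key₁ _ hmeas₁).trans (gaussian_integral_sub μ₁ σ₁ hσ₁)
    have e₂ : ∫ z : ℝ × ℝ, (z.2 - μ₂) ∂γ = 0 :=
      (key₂ _ hmeas₂).trans (gaussian_integral_sub μ₂ σ₂ hσ₂)
    have e₃ : ∫ z : ℝ × ℝ, (z.1 - μ₁) ^ 2 ∂γ = σ₁ ^ 2 :=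
      (key₁ _ (hmeas₁.pow_const 2)).trans (gaussian_integral_sq_sub μ₁ σ₁ hσ₁)
    have e₄ : ∫ z : ℝ × ℝ, (z.2 - μ₂) ^ 2 ∂γ = σ₂ ^ 2 :=
      (key₂ _ (hmeas₂.pow_const 2)).trans (gaussian_integral_sq_sub μ₂ σ₂ hσ₂)
    have hintH : ∫ z : ℝ × ℝ, ((μ₁ - μ₂) ^ 2
        + (2 * (μ₁ - μ₂) * ((z.1 - μ₁) - (z.2 - μ₂))
          + ((1 - σ₂/σ₁) * (z.1 - μ₁) ^ 2 + (1 - σ₁/σ₂) * (z.2 - μ₂) ^ 2))) ∂γ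
        = (μ₁ - μ₂) ^ 2 + (σ₁ - σ₂) ^ 2 := by
      rw [integral_add (integrable_const _) hH₆, integral_add hH₂ hH₅, integral_add hH₃ hH₄,
        integral_const_mul, integral_const_mul, integral_const_mul,
        integral_sub A B, integral_const, e₁, e₂, e₃, e₄]
      simp only [measure_univ, ENNReal.toReal_one, probReal_univ, smul_eq_mul, one_mul, sub_zero, mul_zero]
      field_simp
      ring
    linarith [hle, hintH]
  unfold W2sq
  exact le_antisymm (csInf_le ⟨_, fun c hc => hlb c hc⟩ hmem) (le_csInf ⟨_, hmem⟩ fun c hc => hlb c hc)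
end

section
/- Let g : ℝ → ℝ satisfy Real.erf (g x) = x for all x ∈ (−1, 1) and g (Real.erf y) = y for all y ∈ ℝ (g is the inverse error function). Then ∫ z in (−1)..1, (g z)² dz = 1. -/
open MeasureTheory ProbabilityTheory
open scoped ENNReal NNReal

lemma erf_hasDerivAt (y : ℝ) :
    HasDerivAt Real.erf (2 / Real.sqrt Real.pi * Real.exp (-y ^ 2)) y := by
  have h : HasDerivAt (fun x => ∫ s in (0:ℝ)..x, Real.exp (-s ^ 2)) (Real.exp (-y ^ 2)) y :=
    ((Real.continuous_exp.comp (by continuity)).integral_hasStrictDerivAt 0 y).hasDerivAt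
  exact h.const_mul (2 / Real.sqrt Real.pi)

lemma gauss_integrableOn (y : ℝ) : IntegrableOn (fun s : ℝ => Real.exp (-s ^ 2)) (Set.Ioi y) := by
  have := (integrable_exp_neg_mul_sq (one_pos)).integrableOn (s := Set.Ioi y)
  simpa using this

lemma gauss_int_lt (y : ℝ) :
    ∫ s in (0:ℝ)..y, Real.exp (-s ^ 2) < Real.sqrt Real.pi / 2 := by
  have h0 : (0:ℝ) < Real.sqrt Real.pi / 2 := by positivity
  rcases le_or_gt y 0 with hy | hy
  · have : ∫ s in (0:ℝ)..y, Real.exp (-s ^ 2) ≤ 0 := by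
      rw [intervalIntegral.integral_symm]
      simp only [neg_nonpos]
      exact intervalIntegral.integral_nonneg hy (fun x _ => (Real.exp_pos _).le)
    linarith
  · have hIoi : ∫ s in Set.Ioi (0:ℝ), Real.exp (-s ^ 2) = Real.sqrt Real.pi / 2 := by
      have := integral_gaussian_Ioi 1
      simpa using this
    have hsplit : (∫ s in Set.Ioc (0:ℝ) y, Real.exp (-s ^ 2))
        + ∫ s in Set.Ioi y, Real.exp (-s ^ 2) = ∫ s in Set.Ioi (0:ℝ), Real.exp (-s ^ 2) := by
      rw [← setIntegral_union (Set.Ioc_disjoint_Ioi le_rfl) measurableSet_Ioi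
        ((gauss_integrableOn 0).mono_set Set.Ioc_subset_Ioi_self) (gauss_integrableOn y),
        Set.Ioc_union_Ioi_eq_Ioi hy.le]
    have htail : (0:ℝ) < ∫ s in Set.Ioi y, Real.exp (-s ^ 2) := by
      rw [setIntegral_pos_iff_support_of_nonneg_ae]
      · have : (Function.support fun s : ℝ => Real.exp (-s ^ 2)) = Set.univ := by
          ext x; simp [Function.support, (Real.exp_pos _).ne']
        rw [this]
        simp
      · exact Filter.Eventually.of_forall fun x => (Real.exp_pos _).le
      · exact gauss_integrableOn y
    rw [intervalIntegral.integral_of_le hy.le]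
    linarith [hsplit, hIoi]

lemma abs_erf_lt_one (y : ℝ) : Real.erf y ∈ Set.Ioo (-1:ℝ) 1 := by
  have hpi : (0:ℝ) < Real.sqrt Real.pi := Real.sqrt_pos.mpr Real.pi_pos
  have h1 := gauss_int_lt y
  have h2 := gauss_int_lt (-y)
  have hodd : ∫ s in (0:ℝ)..(-y), Real.exp (-s ^ 2)
      = -∫ s in (0:ℝ)..y, Real.exp (-s ^ 2) := by
    have := intervalIntegral.integral_comp_neg (a := (0:ℝ)) (b := -y)
      (fun s => Real.exp (-s ^ 2))
    simp only [neg_neg, neg_zero] at this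
    rw [show (fun s : ℝ => Real.exp (-(-s) ^ 2)) = fun s : ℝ => Real.exp (-s ^ 2) by
      funext s; ring_nf] at this
    rw [this, intervalIntegral.integral_symm]
  rw [hodd] at h2
  constructor
  · rw [Real.erf, neg_lt, ← mul_neg]
    calc 2 / Real.sqrt Real.pi * -∫ s in (0:ℝ)..y, Real.exp (-s ^ 2)
        < 2 / Real.sqrt Real.pi * (Real.sqrt Real.pi / 2) := by
          exact mul_lt_mul_of_pos_left h2 (by positivity)
      _ = 1 := by field_simp
  · rw [Real.erf]
    calc 2 / Real.sqrt Real.pi * ∫ s in (0:ℝ)..y, Real.exp (-s ^ 2)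
        < 2 / Real.sqrt Real.pi * (Real.sqrt Real.pi / 2) := by
          exact mul_lt_mul_of_pos_left h1 (by positivity)
      _ = 1 := by field_simp

/-- The integral of the square of the inverse error function over (-1, 1) equals 1. -/
theorem integral_erfInv_sq (g : ℝ → ℝ)
    (hg₁ : ∀ x ∈ Set.Ioo (-1 : ℝ) 1, Real.erf (g x) = x)
    (hg₂ : ∀ y : ℝ, g (Real.erf y) = y) :
    ∫ z in (-1 : ℝ)..1, (g z) ^ 2 = 1 := by
  have hpi : (0:ℝ) < Real.sqrt Real.pi := Real.sqrt_pos.mpr Real.pi_pos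
  have hrange : Real.erf '' Set.univ = Set.Ioo (-1:ℝ) 1 := by
    apply Set.Subset.antisymm
    · rintro _ ⟨y, -, rfl⟩; exact abs_erf_lt_one y
    · intro x hx; exact ⟨g x, trivial, hg₁ x hx⟩
  have hinj : Set.InjOn Real.erf Set.univ := fun a _ b _ h => by
    rw [← hg₂ a, h, hg₂]
  have key := integral_image_eq_integral_abs_deriv_smul (f' := fun y =>
      2 / Real.sqrt Real.pi * Real.exp (-y ^ 2)) MeasurableSet.univ
    (fun y _ => (erf_hasDerivAt y).hasDerivWithinAt) hinj (fun z => (g z) ^ 2)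
  rw [hrange, Measure.restrict_univ] at key
  rw [intervalIntegral.integral_of_le (by norm_num), MeasureTheory.integral_Ioc_eq_integral_Ioo,
    key]
  have hsimp : ∀ y : ℝ, |2 / Real.sqrt Real.pi * Real.exp (-y ^ 2)| • (g (Real.erf y)) ^ 2
      = 2 / Real.sqrt Real.pi * (y ^ 2 * Real.exp (-y ^ 2)) := by
    intro y
    rw [hg₂, smul_eq_mul, abs_of_pos (by positivity)]
    ring
  simp_rw [hsimp]
  rw [MeasureTheory.integral_const_mul]
  have habs : ∫ y : ℝ, y ^ 2 * Real.exp (-y ^ 2)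
      = 2 * ∫ x in Set.Ioi (0:ℝ), x ^ 2 * Real.exp (-x ^ 2) := by
    rw [← integral_comp_abs (f := fun x => x ^ 2 * Real.exp (-x ^ 2))]
    congr 1; funext y; rw [sq_abs]
  have hioi : ∫ x in Set.Ioi (0:ℝ), x ^ 2 * Real.exp (-x ^ 2)
      = Real.sqrt Real.pi / 4 := by
    have h := integral_rpow_mul_exp_neg_rpow (p := 2) (q := 2) two_pos (by norm_num)
    have h2 : ∫ x in Set.Ioi (0:ℝ), x ^ 2 * Real.exp (-x ^ 2)
        = ∫ x in Set.Ioi (0:ℝ), x ^ (2:ℝ) * Real.exp (-x ^ (2:ℝ)) :=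
      setIntegral_congr_fun measurableSet_Ioi (fun x hx => by
        rw [← Real.rpow_natCast x 2]; norm_num)
    rw [h2, h, show ((2:ℝ)+1)/2 = 1/2 + 1 by norm_num, Real.Gamma_add_one (by norm_num),
      Real.Gamma_one_half_eq]
    ring
  rw [habs, hioi]
  field_simp
  ring
end
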